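/- Let α > 0, β, γ, δ ≥ 0 with αδ - βγ ≠ 0 and β + γ > 0, and let H(w,w') = (α conj(w₁)w'₁ + β conj(w₂)w'₂ + β conj(w₃)w'₃, γ conj(w₁)w'₁ + δ conj(w₂)w'₂ + δ conj(w₃)w'₃) be a Hermitian form on ℂ³ with values in ℂ². Suppose Φ : ℂ² → ℂ³ is ℂ-linear such that for every w ∈ ℂ³ the map x ↦ Im H(w, Φ(x)), x ∈ ℝ², is a diagonal linear map of ℝ², and c : ℂ³ × ℂ³ → ℂ³ is a symmetric ℂ-bilinear form with H(w, c(w',w')) = 2i H(Φ(H(w',w)), w') for all w, w' ∈ ℂ³. Then Φ = 0 and c = 0. -/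
import Mathlib


open Matrix

/-- The `ℂ²`-valued Hermitian form on `ℂ³`:
`H(w,w') = (α conj(w₁)w'₁ + β conj(w₂)w'₂ + β conj(w₃)w'₃,
            γ conj(w₁)w'₁ + δ conj(w₂)w'₂ + δ conj(w₃)w'₃)`. -/
noncomputable def hermD4 (α β γ δ : ℝ) (w w' : Fin 3 → ℂ) : Fin 2 → ℂ :=
  ![(α : ℂ) * (starRingEnd ℂ) (w 0) * w' 0 + (β : ℂ) * (starRingEnd ℂ) (w 1) * w' 1
      + (β : ℂ) * (starRingEnd ℂ) (w 2) * w' 2,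
    (γ : ℂ) * (starRingEnd ℂ) (w 0) * w' 0 + (δ : ℂ) * (starRingEnd ℂ) (w 1) * w' 1
      + (δ : ℂ) * (starRingEnd ℂ) (w 2) * w' 2]

/- Fast `rfl` lemmas for vector entries (avoids slow `Matrix.cons_val_two`). -/
lemma hermD4_vec0 (a b c : ℂ) : ![a, b, c] 0 = a := rfl
lemma hermD4_vec1 (a b c : ℂ) : ![a, b, c] 1 = b := rfl
lemma hermD4_vec2 (a b c : ℂ) : ![a, b, c] 2 = c := rfl

/-- If the imaginary parts of `r * conj(1) * z` and `r * conj(I) * z` vanish,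
then `r * z = 0`. -/
lemma hermD4_coeff_zero (r : ℝ) (z : ℂ)
    (h1 : ((r : ℂ) * (starRingEnd ℂ) 1 * z).im = 0)
    (h2 : ((r : ℂ) * (starRingEnd ℂ) Complex.I * z).im = 0) :
    (r : ℂ) * z = 0 := by
  simp at h1 h2
  rcases h1 with hr | hz1
  · simp [hr]
  · rcases h2 with hr | hz2
    · simp [hr]
    · have : z = 0 := Complex.ext hz2 hz1
      simp [this]

set_option maxHeartbeats 10000000 in
/-- (`g_{1/2} = 0` for the Siegel domain `D₄`.) If `Φ : ℂ² → ℂ³` is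
`ℂ`-linear such that `x ↦ Im H(w,Φ(x))` is a diagonal map of `ℝ²` for every `w ∈ ℂ³`,
and `c` is a symmetric `ℂ`-bilinear form on `ℂ³` with
`H(w, c(w',w')) = 2i H(Φ(H(w',w)), w')`, then `Φ = 0` and `c = 0`. -/
theorem g_half_zero_D4 (α β γ δ : ℝ) (hα : 0 < α) (hβ : 0 ≤ β) (hγ : 0 ≤ γ) (hδ : 0 ≤ δ)
    (hdet : α * δ - β * γ ≠ 0) (hβγ : 0 < β + γ)
    (Φ : (Fin 2 → ℂ) →ₗ[ℂ] (Fin 3 → ℂ))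
    (hdiag : ∀ w : Fin 3 → ℂ, ∀ i j : Fin 2, i ≠ j →
      ((hermD4 α β γ δ w (Φ (fun l => if l = j then 1 else 0))) i).im = 0)
    (c : (Fin 3 → ℂ) →ₗ[ℂ] (Fin 3 → ℂ) →ₗ[ℂ] (Fin 3 → ℂ))
    (hsym : ∀ u v : Fin 3 → ℂ, c u v = c v u)
    (hc : ∀ w w' : Fin 3 → ℂ,
      hermD4 α β γ δ w (c w' w')
        = (2 * Complex.I) • hermD4 α β γ δ (Φ (hermD4 α β γ δ w' w)) w') :
    Φ = 0 ∧ c = 0 := by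
  have hα' : (α : ℂ) ≠ 0 := Complex.ofReal_ne_zero.mpr hα.ne'
  -- decomposition of Φ
  have hΦx : ∀ x : Fin 2 → ℂ, Φ x = x 0 • Φ (fun l => if l = 0 then 1 else 0)
      + x 1 • Φ (fun l => if l = 1 then 1 else 0) := by
    intro x
    have hxx : x = x 0 • (fun l : Fin 2 => if l = 0 then (1 : ℂ) else 0)
        + x 1 • (fun l : Fin 2 => if l = 1 then (1 : ℂ) else 0) := by
      funext i; fin_cases i <;> simp
    conv_lhs => rw [hxx]
    rw [_root_.map_add, _root_.map_smul, _root_.map_smul]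
  -- extraction of the diagonality conditions
  have hA : (α : ℂ) * (Φ (fun l => if l = 1 then 1 else 0)) 0 = 0 :=
    hermD4_coeff_zero _ _
      (by simpa [hermD4, hermD4_vec0, hermD4_vec1, hermD4_vec2] using
        hdiag ![1,0,0] 0 1 (by decide))
      (by simpa [hermD4, hermD4_vec0, hermD4_vec1, hermD4_vec2] using
        hdiag ![Complex.I,0,0] 0 1 (by decide))
  have hB1 : (β : ℂ) * (Φ (fun l => if l = 1 then 1 else 0)) 1 = 0 :=
    hermD4_coeff_zero _ _
      (by simpa [hermD4, hermD4_vec0, hermD4_vec1, hermD4_vec2] using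
        hdiag ![0,1,0] 0 1 (by decide))
      (by simpa [hermD4, hermD4_vec0, hermD4_vec1, hermD4_vec2] using
        hdiag ![0,Complex.I,0] 0 1 (by decide))
  have hB2 : (β : ℂ) * (Φ (fun l => if l = 1 then 1 else 0)) 2 = 0 :=
    hermD4_coeff_zero _ _
      (by simpa [hermD4, hermD4_vec0, hermD4_vec1, hermD4_vec2] using
        hdiag ![0,0,1] 0 1 (by decide))
      (by simpa [hermD4, hermD4_vec0, hermD4_vec1, hermD4_vec2] using
        hdiag ![0,0,Complex.I] 0 1 (by decide))
  have hG : (γ : ℂ) * (Φ (fun l => if l = 0 then 1 else 0)) 0 = 0 :=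
    hermD4_coeff_zero _ _
      (by simpa [hermD4, hermD4_vec0, hermD4_vec1, hermD4_vec2] using
        hdiag ![1,0,0] 1 0 (by decide))
      (by simpa [hermD4, hermD4_vec0, hermD4_vec1, hermD4_vec2] using
        hdiag ![Complex.I,0,0] 1 0 (by decide))
  have hD1 : (δ : ℂ) * (Φ (fun l => if l = 0 then 1 else 0)) 1 = 0 :=
    hermD4_coeff_zero _ _
      (by simpa [hermD4, hermD4_vec0, hermD4_vec1, hermD4_vec2] using
        hdiag ![0,1,0] 1 0 (by decide))
      (by simpa [hermD4, hermD4_vec0, hermD4_vec1, hermD4_vec2] using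
        hdiag ![0,Complex.I,0] 1 0 (by decide))
  have hD2 : (δ : ℂ) * (Φ (fun l => if l = 0 then 1 else 0)) 2 = 0 :=
    hermD4_coeff_zero _ _
      (by simpa [hermD4, hermD4_vec0, hermD4_vec1, hermD4_vec2] using
        hdiag ![0,0,1] 1 0 (by decide))
      (by simpa [hermD4, hermD4_vec0, hermD4_vec1, hermD4_vec2] using
        hdiag ![0,0,Complex.I] 1 0 (by decide))
  have hb0 : (Φ (fun l => if l = 1 then 1 else 0)) 0 = 0 :=
    (mul_eq_zero.mp hA).resolve_left hα'
  -- helper to conclude Φ = 0 from the vanishing of all entries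
  have finish : (Φ (fun l => if l = 0 then 1 else 0)) 0 = 0 →
      (Φ (fun l => if l = 0 then 1 else 0)) 1 = 0 →
      (Φ (fun l => if l = 0 then 1 else 0)) 2 = 0 →
      (Φ (fun l => if l = 1 then 1 else 0)) 1 = 0 →
      (Φ (fun l => if l = 1 then 1 else 0)) 2 = 0 → Φ = 0 := by
    intro p0 p1 p2 q1 q2
    have hE0f : Φ (fun l => if l = 0 then 1 else 0) = 0 := by
      funext i
      fin_cases i
      · simpa using p0
      · simpa using p1
      · simpa using p2
    have hE1f : Φ (fun l => if l = 1 then 1 else 0) = 0 := by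
      funext i
      fin_cases i
      · simpa using hb0
      · simpa using q1
      · simpa using q2
    apply LinearMap.ext
    intro x
    rw [hΦx x, hE0f, hE1f]
    simp
  have hΦ0 : Φ = 0 := by
    rcases eq_or_lt_of_le hδ with hδ0 | hδpos
    · -- δ = 0 : then β > 0 and γ > 0, Φ E1 = 0, (Φ E0) 0 = 0
      subst hδ0
      have hβpos : 0 < β := lt_of_le_of_ne hβ
        (fun h => hdet (by rw [← h]; ring))
      have hγpos : 0 < γ := lt_of_le_of_ne hγ
        (fun h => hdet (by rw [← h]; ring))
      have hβ' : (β : ℂ) ≠ 0 := Complex.ofReal_ne_zero.mpr hβpos.ne'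
      have hγ' : (γ : ℂ) ≠ 0 := Complex.ofReal_ne_zero.mpr hγpos.ne'
      have hb1 := (mul_eq_zero.mp hB1).resolve_left hβ'
      have hb2 := (mul_eq_zero.mp hB2).resolve_left hβ'
      have ha0 := (mul_eq_zero.mp hG).resolve_left hγ'
      have hV1f : Φ (fun l => if l = 1 then 1 else 0) = 0 := by
        funext i
        fin_cases i
        · simpa using hb0
        · simpa using hb1
        · simpa using hb2
      obtain ⟨a1, ha1⟩ : ∃ z, (Φ (fun l => if l = 0 then 1 else 0)) 1 = z := ⟨_, rfl⟩
      obtain ⟨a2, ha2⟩ : ∃ z, (Φ (fun l => if l = 0 then 1 else 0)) 2 = z := ⟨_, rfl⟩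
      have h := hc ![1,0,0] ![1, a1, a2]
      have h0 := congrFun h 0
      have h1 := congrFun h 1
      rw [hΦx] at h0 h1
      simp only [hermD4, hermD4_vec0, hermD4_vec1, hermD4_vec2, Matrix.cons_val_zero,
        Matrix.cons_val_one, Matrix.head_cons, _root_.map_one, _root_.map_zero,
        _root_.map_mul, _root_.map_add, Complex.ofReal_zero, zero_mul, mul_zero, mul_one,
        one_mul, add_zero, zero_add, Pi.add_apply, Pi.smul_apply, smul_eq_mul, hV1f, ha0,
        ha1, ha2, Pi.zero_apply, Complex.conj_ofReal] at h0 h1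
      have hC0 : (c ![1, a1, a2]) ![1, a1, a2] 0 = 0 :=
        (mul_eq_zero.mp h1).resolve_left hγ'
      rw [hC0, mul_zero] at h0
      have key : (2 * Complex.I * (β : ℂ) * (α : ℂ))
          * ((starRingEnd ℂ) a1 * a1 + (starRingEnd ℂ) a2 * a2) = 0 := by
        linear_combination -h0
      have hne : (2 * Complex.I * (β : ℂ) * (α : ℂ)) ≠ 0 :=
        mul_ne_zero (mul_ne_zero (mul_ne_zero two_ne_zero Complex.I_ne_zero) hβ') hα'
      have hsum := (mul_eq_zero.mp key).resolve_left hne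
      rw [← Complex.normSq_eq_conj_mul_self, ← Complex.normSq_eq_conj_mul_self,
        ← Complex.ofReal_add, Complex.ofReal_eq_zero] at hsum
      have n1 : Complex.normSq a1 = 0 := by
        have := Complex.normSq_nonneg a1
        have := Complex.normSq_nonneg a2
        linarith
      have n2 : Complex.normSq a2 = 0 := by
        have := Complex.normSq_nonneg a1
        have := Complex.normSq_nonneg a2
        linarith
      exact finish ha0 (by rw [ha1]; exact Complex.normSq_eq_zero.mp n1)
        (by rw [ha2]; exact Complex.normSq_eq_zero.mp n2) hb1 hb2
    · -- δ > 0
      have hδ' : (δ : ℂ) ≠ 0 := Complex.ofReal_ne_zero.mpr hδpos.ne'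
      have ha1 := (mul_eq_zero.mp hD1).resolve_left hδ'
      have ha2 := (mul_eq_zero.mp hD2).resolve_left hδ'
      rcases eq_or_lt_of_le hβ with hβ0 | hβpos
      · -- β = 0 : then γ > 0, Φ E0 = 0
        subst hβ0
        have hγpos : 0 < γ := by linarith
        have hγ' : (γ : ℂ) ≠ 0 := Complex.ofReal_ne_zero.mpr hγpos.ne'
        have ha0 := (mul_eq_zero.mp hG).resolve_left hγ'
        have hV0f : Φ (fun l => if l = 0 then 1 else 0) = 0 := by
          funext i
          fin_cases i
          · simpa using ha0
          · simpa using ha1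
          · simpa using ha2
        obtain ⟨b1, hb1⟩ : ∃ z, (Φ (fun l => if l = 1 then 1 else 0)) 1 = z := ⟨_, rfl⟩
        obtain ⟨b2, hb2⟩ : ∃ z, (Φ (fun l => if l = 1 then 1 else 0)) 2 = z := ⟨_, rfl⟩
        have h := hc ![1,0,0] ![1, b1, b2]
        have h0 := congrFun h 0
        have h1 := congrFun h 1
        rw [hΦx] at h0 h1
        simp only [hermD4, hermD4_vec0, hermD4_vec1, hermD4_vec2, Matrix.cons_val_zero,
          Matrix.cons_val_one, Matrix.head_cons, _root_.map_one, _root_.map_zero,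
          _root_.map_mul, _root_.map_add, Complex.ofReal_zero, zero_mul, mul_zero, mul_one,
          one_mul, add_zero, zero_add, Pi.add_apply, Pi.smul_apply, smul_eq_mul, hV0f, hb0,
          hb1, hb2, Pi.zero_apply, Complex.conj_ofReal] at h0 h1
        have hC0 : (c ![1, b1, b2]) ![1, b1, b2] 0 = 0 :=
          (mul_eq_zero.mp h0).resolve_left hα'
        rw [hC0, mul_zero] at h1
        have key : (2 * Complex.I * (δ : ℂ) * (γ : ℂ))
            * ((starRingEnd ℂ) b1 * b1 + (starRingEnd ℂ) b2 * b2) = 0 := by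
          linear_combination -h1
        have hne : (2 * Complex.I * (δ : ℂ) * (γ : ℂ)) ≠ 0 :=
          mul_ne_zero (mul_ne_zero (mul_ne_zero two_ne_zero Complex.I_ne_zero) hδ') hγ'
        have hsum := (mul_eq_zero.mp key).resolve_left hne
        rw [← Complex.normSq_eq_conj_mul_self, ← Complex.normSq_eq_conj_mul_self,
          ← Complex.ofReal_add, Complex.ofReal_eq_zero] at hsum
        have n1 : Complex.normSq b1 = 0 := by
          have := Complex.normSq_nonneg b1
          have := Complex.normSq_nonneg b2
          linarith
        have n2 : Complex.normSq b2 = 0 := by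
          have := Complex.normSq_nonneg b1
          have := Complex.normSq_nonneg b2
          linarith
        exact finish ha0 ha1 ha2 (by rw [hb1]; exact Complex.normSq_eq_zero.mp n1)
          (by rw [hb2]; exact Complex.normSq_eq_zero.mp n2)
      · -- β > 0
        have hβ' : (β : ℂ) ≠ 0 := Complex.ofReal_ne_zero.mpr hβpos.ne'
        have hb1 := (mul_eq_zero.mp hB1).resolve_left hβ'
        have hb2 := (mul_eq_zero.mp hB2).resolve_left hβ'
        rcases eq_or_lt_of_le hγ with hγ0 | hγpos
        · -- γ = 0 : kill (Φ E0) 0 via hc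
          subst hγ0
          have hV1f : Φ (fun l => if l = 1 then 1 else 0) = 0 := by
            funext i
            fin_cases i
            · simpa using hb0
            · simpa using hb1
            · simpa using hb2
          obtain ⟨a0, ha0⟩ : ∃ z, (Φ (fun l => if l = 0 then 1 else 0)) 0 = z := ⟨_, rfl⟩
          have h := hc ![0,1,0] ![1, 1, 0]
          have h0 := congrFun h 0
          have h1 := congrFun h 1
          rw [hΦx] at h0 h1
          simp only [hermD4, hermD4_vec0, hermD4_vec1, hermD4_vec2, Matrix.cons_val_zero,
            Matrix.cons_val_one, Matrix.head_cons, _root_.map_one, _root_.map_zero,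
            _root_.map_mul, _root_.map_add, Complex.ofReal_zero, zero_mul, mul_zero, mul_one,
            one_mul, add_zero, zero_add, Pi.add_apply, Pi.smul_apply, smul_eq_mul, hV1f, ha0,
            ha1, ha2, Pi.zero_apply, Complex.conj_ofReal] at h0 h1
          have hC1 : (c ![1, 1, 0]) ![1, 1, 0] 1 = 0 :=
            (mul_eq_zero.mp h1).resolve_left hδ'
          rw [hC1, mul_zero] at h0
          have key : (2 * Complex.I * (α : ℂ) * (β : ℂ)) * (starRingEnd ℂ) a0 = 0 := by
            linear_combination -h0
          have hne : (2 * Complex.I * (α : ℂ) * (β : ℂ)) ≠ 0 :=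
            mul_ne_zero (mul_ne_zero (mul_ne_zero two_ne_zero Complex.I_ne_zero) hα') hβ'
          have hconj := (mul_eq_zero.mp key).resolve_left hne
          have ha0' : a0 = 0 := by
            have := congrArg (starRingEnd ℂ) hconj
            simpa using this
          exact finish (by rw [ha0]; exact ha0') ha1 ha2 hb1 hb2
        · -- γ > 0 : everything vanishes already
          have hγ' : (γ : ℂ) ≠ 0 := Complex.ofReal_ne_zero.mpr hγpos.ne'
          have ha0 := (mul_eq_zero.mp hG).resolve_left hγ'
          exact finish ha0 ha1 ha2 hb1 hb2
  -- now c = 0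
  refine ⟨hΦ0, ?_⟩
  have hβδ : (0 : ℝ) < β ∨ (0 : ℝ) < δ := by
    rcases eq_or_lt_of_le hβ with h | h
    · rcases eq_or_lt_of_le hδ with h' | h'
      · exact absurd (by rw [← h, ← h']; ring) hdet
      · exact Or.inr h'
    · exact Or.inl h
  have hq : ∀ w' : Fin 3 → ℂ, c w' w' = 0 := by
    intro w'
    have h0 := congrFun (hc ![1,0,0] w') 0
    have h10 := congrFun (hc ![0,1,0] w') 0
    have h11 := congrFun (hc ![0,1,0] w') 1
    have h20 := congrFun (hc ![0,0,1] w') 0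
    have h21 := congrFun (hc ![0,0,1] w') 1
    rw [hΦ0] at h0 h10 h11 h20 h21
    simp only [hermD4, hermD4_vec0, hermD4_vec1, hermD4_vec2, Matrix.cons_val_zero,
      Matrix.cons_val_one, Matrix.head_cons, LinearMap.zero_apply, _root_.map_one,
      _root_.map_zero, _root_.map_mul, _root_.map_add, Complex.ofReal_zero, zero_mul,
      mul_zero, mul_one, one_mul, add_zero, zero_add, Pi.zero_apply, smul_zero,
      Pi.smul_apply, smul_eq_mul] at h0 h10 h11 h20 h21
    have e0 : (c w') w' 0 = 0 := (mul_eq_zero.mp h0).resolve_left hα'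
    have e1 : (c w') w' 1 = 0 := by
      rcases hβδ with hb | hd
      · exact (mul_eq_zero.mp h10).resolve_left (Complex.ofReal_ne_zero.mpr hb.ne')
      · exact (mul_eq_zero.mp h11).resolve_left (Complex.ofReal_ne_zero.mpr hd.ne')
    have e2 : (c w') w' 2 = 0 := by
      rcases hβδ with hb | hd
      · exact (mul_eq_zero.mp h20).resolve_left (Complex.ofReal_ne_zero.mpr hb.ne')
      · exact (mul_eq_zero.mp h21).resolve_left (Complex.ofReal_ne_zero.mpr hd.ne')
    funext i
    fin_cases i
    · simpa using e0
    · simpa using e1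
    · simpa using e2
  apply LinearMap.ext
  intro u
  apply LinearMap.ext
  intro v
  have h := hq (u + v)
  simp only [map_add, LinearMap.add_apply, hq u, hq v, zero_add, add_zero] at h
  rw [hsym v u] at h
  have h2 : (2 : ℂ) • c u v = 0 := by rw [two_smul]; exact h
  simpa using (smul_eq_zero.mp h2).resolve_left two_ne_zero
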